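/- (Near-optimal prediction step of the Scaled SOA.) Let H ⊆ [0,1]^X be a hypothesis class with D^onl(H) < ∞, let x ∈ X be such that H_{(x,y)} ≠ ∅ for at least one y ∈ [0,1], and let ε' > 0. Then there exists a prediction ŷ ∈ [0,1] such that for every y* ∈ [0,1] with H_{(x,y*)} ≠ ∅: D^onl(H_{(x,y*)}) ≤ D^onl(H) − |ŷ − y*| + ε'. -/

import Mathlib

open scoped ENNReal

namespace RealizableRegression

/-- The prefix of length `ℓ` of the root-to-leaf path `y`. -/
def pathPref {d : ℕ} (y : Fin d → Bool) (ℓ : ℕ) : List Bool := (List.ofFn y).take ℓ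

/-- `(x, s)` is a scaled Littlestone tree of depth `d` for `H`: nodes `x u ∈ X` for
positions `u ∈ {0,1}^{<d}`, edge labels `s u b ∈ [0,1]` for the edge from `u` to its
child `b`, such that for every path `y ∈ {0,1}^d` and every `n < d` there is `h ∈ H`
realizing the first `n+1` edge labels along `y`. -/
def IsSLTree {X : Type*} (H : Set (X → ℝ)) (d : ℕ)
    (x : List Bool → X) (s : List Bool → Bool → ℝ) : Prop :=
  (∀ u b, s u b ∈ Set.Icc (0:ℝ) 1) ∧
    ∀ y : Fin d → Bool, ∀ n : ℕ, n < d → ∃ h ∈ H, ∀ ℓ : Fin d, (ℓ : ℕ) ≤ n →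
      h (x (pathPref y ℓ)) = s (pathPref y ℓ) (y ℓ)

/-- The sum of the gaps `γ_u = |s_{u0} − s_{u1}|` along the path `y`. -/
noncomputable def pathGaps {d : ℕ} (s : List Bool → Bool → ℝ) (y : Fin d → Bool) : ℝ :=
  ∑ ℓ : Fin d, |s (pathPref y ℓ) false - s (pathPref y ℓ) true|

/-- The online dimension `D^onl(H)`: the supremum over all finite-depth scaled
Littlestone trees of the infimum over root-to-leaf paths of the sum of the gaps. -/
noncomputable def onlDim {X : Type*} (H : Set (X → ℝ)) : ℝ≥0∞ :=
  ⨆ (d : ℕ) (x : List Bool → X) (s : List Bool → Bool → ℝ) (_ : IsSLTree H d x s),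
    ⨅ y : Fin d → Bool, ENNReal.ofReal (pathGaps s y)

/-- The history `((x_1,y_1), …, (x_{t−1},y_{t−1}))` seen before round `t`. -/
def histBefore {X : Type*} {T : ℕ} (xs : Fin T → X) (ys : Fin T → ℝ) (t : Fin T) :
    List (X × ℝ) :=
  List.ofFn fun i : Fin t.1 =>
    (xs ⟨i.1, i.2.trans t.2⟩, ys ⟨i.1, i.2.trans t.2⟩)


lemma pathGaps_nonneg {d : ℕ} (s : List Bool → Bool → ℝ) (y : Fin d → Bool) :
    0 ≤ pathGaps s y :=
  Finset.sum_nonneg fun _ _ => abs_nonneg _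

lemma iInf_le_onlDim {X : Type*} {H : Set (X → ℝ)} {d : ℕ} {x : List Bool → X}
    {s : List Bool → Bool → ℝ} (ht : IsSLTree H d x s) :
    (⨅ y : Fin d → Bool, ENNReal.ofReal (pathGaps s y)) ≤ onlDim H :=
  le_iSup_of_le d <| le_iSup_of_le x <| le_iSup_of_le s <| le_iSup_of_le ht le_rfl

lemma IsSLTree.mono {X : Type*} {H H' : Set (X → ℝ)} (hHH : H ⊆ H') {d : ℕ}
    {x : List Bool → X} {s : List Bool → Bool → ℝ} (ht : IsSLTree H d x s) :
    IsSLTree H' d x s :=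
  ⟨ht.1, fun y n hn => (ht.2 y n hn).imp fun _ ⟨hh, hr⟩ => ⟨hHH hh, hr⟩⟩

lemma onlDim_mono {X : Type*} {H H' : Set (X → ℝ)} (hHH : H ⊆ H') :
    onlDim H ≤ onlDim H' :=
  iSup_le fun _ => iSup_le fun _ => iSup_le fun _ => iSup_le fun ht =>
    iInf_le_onlDim (ht.mono hHH)

lemma pathGaps_eq_range {d : ℕ} (s : List Bool → Bool → ℝ) (y : Fin d → Bool) :
    pathGaps s y = ∑ ℓ ∈ Finset.range d,
      |s (pathPref y ℓ) false - s (pathPref y ℓ) true| :=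
  Fin.sum_univ_eq_sum_range (fun ℓ => |s (pathPref y ℓ) false - s (pathPref y ℓ) true|) d

lemma pathPref_castLE {d e : ℕ} (hde : d ≤ e) (z : Fin e → Bool) {ℓ : ℕ} (hℓ : ℓ ≤ d) :
    pathPref z ℓ = pathPref (fun i : Fin d => z (Fin.castLE hde i)) ℓ := by
  apply List.ext_getElem
  · simp [pathPref]; omega
  · intro i h1 h2
    simp only [pathPref, List.getElem_take, List.getElem_ofFn]
    rfl

lemma pathPref_length {d : ℕ} (y : Fin d → Bool) {ℓ : ℕ} (hℓ : ℓ ≤ d) :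
    (pathPref y ℓ).length = ℓ := by
  simp [pathPref]; omega

section Pad
variable {X : Type*} {H' : Set (X → ℝ)} {x : X} {y : ℝ}
  {d e : ℕ} {x0 : List Bool → X} {s0 : List Bool → Bool → ℝ}

lemma pad_isSLTree (hy : y ∈ Set.Icc (0:ℝ) 1) (hmem : ∀ h ∈ H', h x = y)
    (hne : H'.Nonempty) (hde : d ≤ e) (ht : IsSLTree H' d x0 s0) :
    IsSLTree H' e (fun u => if u.length < d then x0 u else x)
      (fun u b => if u.length < d then s0 u b else y) := by
  constructor
  · intro u b
    by_cases h : u.length < d <;> simp [h, ht.1 u b, hy]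
  · intro z n hn
    set w : Fin d → Bool := fun i => z (Fin.castLE hde i) with hw
    rcases Nat.eq_zero_or_pos d with hd0 | hd0
    · obtain ⟨h, hh⟩ := hne
      refine ⟨h, hh, fun ℓ _ => ?_⟩
      have hlen : (pathPref z (ℓ:ℕ)).length = (ℓ:ℕ) := pathPref_length z ℓ.2.le
      have : ¬ (pathPref z (ℓ:ℕ)).length < d := by omega
      simp [this, hmem h hh]
    · obtain ⟨h, hh, hr⟩ := ht.2 w (min n (d-1)) (by omega)
      refine ⟨h, hh, fun ℓ hℓ => ?_⟩
      have hlen : (pathPref z (ℓ:ℕ)).length = (ℓ:ℕ) := pathPref_length z ℓ.2.le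
      by_cases hc : (ℓ:ℕ) < d
      · have hpp : pathPref z (ℓ:ℕ) = pathPref w (ℓ:ℕ) := pathPref_castLE hde z hc.le
        have hlen' : (pathPref w (ℓ:ℕ)).length < d := by rw [pathPref_length w hc.le]; exact hc
        have hcast : Fin.castLE hde ⟨(ℓ:ℕ), hc⟩ = ℓ := rfl
        have h3 := hr ⟨(ℓ:ℕ), hc⟩ (by simp; omega)
        rw [hpp]
        simp only [if_pos hlen']
        simpa [hw, hcast] using h3
      · have : ¬ (pathPref z (ℓ:ℕ)).length < d := by omega
        simp [this, hmem h hh]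

lemma pad_pathGaps (hde : d ≤ e) (z : Fin e → Bool) :
    pathGaps (fun u b => if u.length < d then s0 u b else y) z
      = pathGaps s0 (fun i : Fin d => z (Fin.castLE hde i)) := by
  set w : Fin d → Bool := fun i => z (Fin.castLE hde i) with hw
  rw [pathGaps_eq_range, pathGaps_eq_range]
  rw [Finset.range_eq_Ico, ← Finset.sum_Ico_consecutive _ (Nat.zero_le d) hde]
  rw [← Finset.range_eq_Ico]
  have h2 : ∑ ℓ ∈ Finset.Ico d e, |(if (pathPref z ℓ).length < d then s0 (pathPref z ℓ) false else y)
      - (if (pathPref z ℓ).length < d then s0 (pathPref z ℓ) true else y)| = 0 := by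
    apply Finset.sum_eq_zero
    intro ℓ hℓ
    rw [Finset.mem_Ico] at hℓ
    have : ¬ (pathPref z ℓ).length < d := by
      rw [pathPref_length z hℓ.2.le]; omega
    simp [this]
  rw [h2, add_zero]
  apply Finset.sum_congr rfl
  intro ℓ hℓ
  rw [Finset.mem_range] at hℓ
  have hlen : (pathPref z ℓ).length < d := by rw [pathPref_length z (hℓ.le.trans hde)]; omega
  rw [pathPref_castLE hde z hℓ.le]
  simp [hlen, hw, ← pathPref_castLE hde z hℓ.le]

end Pad

section Combine
variable {X : Type*} {H : Set (X → ℝ)} {x : X} {yv : Bool → ℝ}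
  {d : ℕ} {xs : Bool → List Bool → X} {ss : Bool → List Bool → Bool → ℝ}

/-- The node labeling of the combined tree. -/
def combX (x : X) (xs : Bool → List Bool → X) : List Bool → X
  | [] => x
  | b :: u => xs b u

/-- The edge labeling of the combined tree. -/
def combS (yv : Bool → ℝ) (ss : Bool → List Bool → Bool → ℝ) : List Bool → Bool → ℝ
  | [], c => yv c
  | b :: u, c => ss b u c

lemma pathPref_zero {d : ℕ} (z : Fin d → Bool) : pathPref z 0 = [] := by
  simp [pathPref]

lemma pathPref_succ {d : ℕ} (z : Fin (d+1) → Bool) (i : ℕ) :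
    pathPref z (i+1) = z 0 :: pathPref (fun j : Fin d => z j.succ) i := by
  rw [pathPref, List.ofFn_succ, List.take_succ_cons]
  rfl

lemma comb_isSLTree (hyv : ∀ b, yv b ∈ Set.Icc (0:ℝ) 1)
    (hne : ∀ b, {h ∈ H | h x = yv b}.Nonempty)
    (ht : ∀ b, IsSLTree {h ∈ H | h x = yv b} d (xs b) (ss b)) :
    IsSLTree H (d+1) (combX x xs) (combS yv ss) := by
  constructor
  · rintro (_ | ⟨b, u⟩) c
    · exact hyv c
    · exact (ht b).1 u c
  · intro z n hn
    set b := z 0 with hb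
    set w : Fin d → Bool := fun j => z j.succ with hw
    have key : ∃ h ∈ {h ∈ H | h x = yv b}, ∀ m : Fin d, (m:ℕ) + 1 ≤ n →
        h (xs b (pathPref w m)) = ss b (pathPref w m) (w m) := by
      rcases Nat.eq_zero_or_pos n with hn0 | hn0
      · obtain ⟨h, hh⟩ := hne b
        exact ⟨h, hh, fun m hm => by omega⟩
      · obtain ⟨h, hh, hr⟩ := (ht b).2 w (n-1) (by omega)
        exact ⟨h, hh, fun m hm => hr m (by omega)⟩
    obtain ⟨h, hh, hr⟩ := key
    refine ⟨h, hh.1, fun ℓ hℓ => ?_⟩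
    rcases ℓ with ⟨ℓv, hℓv⟩
    rcases Nat.eq_zero_or_pos ℓv with h0 | h0
    · subst h0
      rw [pathPref_zero]
      exact hh.2
    · obtain ⟨m, rfl⟩ : ∃ m, ℓv = m + 1 := ⟨ℓv - 1, by omega⟩
      have hmd : m < d := by omega
      rw [pathPref_succ z m]
      have := hr ⟨m, hmd⟩ (by simpa using hℓ)
      simpa [combX, combS, hw] using this

lemma comb_pathGaps (z : Fin (d+1) → Bool) :
    pathGaps (combS yv ss) z
      = |yv false - yv true| + pathGaps (ss (z 0)) (fun j : Fin d => z j.succ) := by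
  rw [pathGaps_eq_range, pathGaps_eq_range, Finset.sum_range_succ']
  rw [pathPref_zero, add_comm]
  congr 1
  · apply Finset.sum_congr rfl
    intro i hi
    rw [pathPref_succ z i]
    rfl

end Combine


section Key
variable {X : Type*}

lemma min_add_abs_le (H : Set (X → ℝ)) (x : X) {y0 y1 : ℝ}
    (hy0 : y0 ∈ Set.Icc (0:ℝ) 1) (hy1 : y1 ∈ Set.Icc (0:ℝ) 1)
    (hn0 : {h ∈ H | h x = y0}.Nonempty) (hn1 : {h ∈ H | h x = y1}.Nonempty) :
    min (onlDim {h ∈ H | h x = y0}) (onlDim {h ∈ H | h x = y1})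
      + ENNReal.ofReal |y0 - y1| ≤ onlDim H := by
  set yv : Bool → ℝ := fun b => if b then y1 else y0 with hyvdef
  have hyv : ∀ b, yv b ∈ Set.Icc (0:ℝ) 1 := by rintro (_|_) <;> simpa [hyvdef]
  have hne : ∀ b, {h ∈ H | h x = yv b}.Nonempty := by
    rintro (_|_) <;> simpa [hyvdef]
  -- Step A: |y0 - y1| ≤ onlDim H via the depth-1 tree
  have htriv : ∀ b, IsSLTree {h ∈ H | h x = yv b} 0 (fun _ => x) (fun _ _ => yv b) :=
    fun b => ⟨fun _ _ => hyv b, fun _ n hn => absurd hn (by omega)⟩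
  have habs : ENNReal.ofReal |y0 - y1| ≤ onlDim H := by
    refine le_trans ?_ (iInf_le_onlDim (comb_isSLTree hyv hne htriv))
    refine le_iInf fun z => ?_
    rw [comb_pathGaps]
    have h0 : pathGaps (fun (_ : List Bool) (_ : Bool) => yv (z 0))
        (fun j : Fin 0 => z j.succ) = 0 := by simp [pathGaps]
    rw [h0, add_zero]
    have : |yv false - yv true| = |y0 - y1| := by simp [hyvdef]
    rw [this]
  -- Step B: for c below the min, c + |y0 - y1| ≤ onlDim H
  have stepB : ∀ c, c < min (onlDim {h ∈ H | h x = y0}) (onlDim {h ∈ H | h x = y1}) →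
      c + ENNReal.ofReal |y0 - y1| ≤ onlDim H := by
    intro c hc
    have hc0 : c < onlDim {h ∈ H | h x = yv false} := by
      simpa [hyvdef] using hc.trans_le (min_le_left _ _)
    have hc1 : c < onlDim {h ∈ H | h x = yv true} := by
      simpa [hyvdef] using hc.trans_le (min_le_right _ _)
    have hcb : ∀ b, c < onlDim {h ∈ H | h x = yv b} := by rintro (_|_) <;> assumption
    have hex : ∀ b, ∃ (d : ℕ) (x0 : List Bool → X) (s0 : List Bool → Bool → ℝ),
        IsSLTree {h ∈ H | h x = yv b} d x0 s0 ∧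
        c < ⨅ y : Fin d → Bool, ENNReal.ofReal (pathGaps s0 y) := by
      intro b
      have := hcb b
      simp only [onlDim, lt_iSup_iff] at this
      obtain ⟨d, x0, s0, ht, hlt⟩ := this
      exact ⟨d, x0, s0, ht, hlt⟩
    choose dd xx sss htt hcc using hex
    set e := max (dd false) (dd true) with he
    have hdele : ∀ b, dd b ≤ e := by rintro (_|_) <;> simp [he]
    set px : Bool → List Bool → X :=
      fun b u => if u.length < dd b then xx b u else x with hpx
    set ps : Bool → List Bool → Bool → ℝ :=
      fun b u c => if u.length < dd b then sss b u c else yv b with hps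
    have hmem : ∀ b, ∀ h ∈ {h ∈ H | h x = yv b}, h x = yv b := fun b h hh => hh.2
    have hpt : ∀ b, IsSLTree {h ∈ H | h x = yv b} e (px b) (ps b) :=
      fun b => pad_isSLTree (hyv b) (hmem b) (hne b) (hdele b) (htt b)
    have hplow : ∀ b (w : Fin e → Bool), c ≤ ENNReal.ofReal (pathGaps (ps b) w) := by
      intro b w
      rw [hps, pad_pathGaps (hdele b) w]
      exact le_trans (hcc b).le (iInf_le _ _)
    refine le_trans ?_ (iInf_le_onlDim (comb_isSLTree hyv hne hpt))
    refine le_iInf fun z => ?_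
    rw [comb_pathGaps, ENNReal.ofReal_add (abs_nonneg _) (pathGaps_nonneg _ _)]
    have : |yv false - yv true| = |y0 - y1| := by simp [hyvdef]
    rw [this, add_comm c]
    exact add_le_add le_rfl (hplow (z 0) _)
  -- Step C: conclude
  have hmin : min (onlDim {h ∈ H | h x = y0}) (onlDim {h ∈ H | h x = y1})
      ≤ onlDim H - ENNReal.ofReal |y0 - y1| := by
    by_contra hlt
    push_neg at hlt
    obtain ⟨c, hc1, hc2⟩ := exists_between hlt
    exact absurd (ENNReal.le_sub_of_add_le_right ENNReal.ofReal_ne_top (stepB c hc2))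
      (not_le.mpr hc1)
  calc min (onlDim {h ∈ H | h x = y0}) (onlDim {h ∈ H | h x = y1})
        + ENNReal.ofReal |y0 - y1|
      ≤ (onlDim H - ENNReal.ofReal |y0 - y1|) + ENNReal.ofReal |y0 - y1| :=
        add_le_add hmin le_rfl
    _ = onlDim H := tsub_add_cancel_of_le habs

end Key


/-- Near-optimal prediction step of the Scaled SOA: if
`D^onl(H) < ∞` and some `y ∈ [0,1]` has nonempty version space `H_{(x,y)}`, then for
every `ε' > 0` there is a prediction `ŷ ∈ [0,1]` such that every `y* ∈ [0,1]` with
`H_{(x,y*)} ≠ ∅` satisfies `D^onl(H_{(x,y*)}) + |ŷ − y*| ≤ D^onl(H) + ε'`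
(i.e. `D^onl(H_{(x,y*)}) ≤ D^onl(H) − |ŷ − y*| + ε'`). -/
theorem statement16 {X : Type*} (H : Set (X → ℝ))
    (hH : ∀ h ∈ H, ∀ x, h x ∈ Set.Icc (0:ℝ) 1)
    (hfin : onlDim H ≠ ⊤) (x : X)
    (hx : ∃ y ∈ Set.Icc (0:ℝ) 1, {h ∈ H | h x = y}.Nonempty)
    (ε' : ℝ) (hε' : 0 < ε') :
    ∃ yhat ∈ Set.Icc (0:ℝ) 1, ∀ ystar ∈ Set.Icc (0:ℝ) 1,
      {h ∈ H | h x = ystar}.Nonempty →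
      onlDim {h ∈ H | h x = ystar} + ENNReal.ofReal |yhat - ystar|
        ≤ onlDim H + ENNReal.ofReal ε' := by
  classical
  set D : ℝ := (onlDim H).toReal with hD
  set f : ℝ → ℝ := fun y => (onlDim {h ∈ H | h x = y}).toReal with hf
  set Y : Set ℝ := {y : ℝ | y ∈ Set.Icc (0:ℝ) 1 ∧ {h ∈ H | h x = y}.Nonempty} with hY
  have hne_top : ∀ y : ℝ, onlDim {h ∈ H | h x = y} ≠ ⊤ := fun y =>
    ne_top_of_le_ne_top hfin (onlDim_mono (Set.sep_subset _ _))
  have hfD : ∀ y ∈ Y, f y ≤ D := fun y _ =>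
    ENNReal.toReal_mono hfin (onlDim_mono (Set.sep_subset _ _))
  have hf0 : ∀ y : ℝ, 0 ≤ f y := fun y => ENNReal.toReal_nonneg
  have key : ∀ y0 ∈ Y, ∀ y1 ∈ Y, f y0 + f y1 + |y0 - y1| ≤ 2 * D := by
    intro y0 hy0 y1 hy1
    have h := min_add_abs_le H x hy0.1 hy1.1 hy0.2 hy1.2
    have h2 := ENNReal.toReal_mono hfin h
    rw [ENNReal.toReal_add (by
        exact ne_top_of_le_ne_top (hne_top y0) (min_le_left _ _))
        ENNReal.ofReal_ne_top,
      ENNReal.toReal_ofReal (abs_nonneg _),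
      ENNReal.toReal_min (hne_top y0) (hne_top y1)] at h2
    have h3 : min (f y0) (f y1) + |y0 - y1| ≤ D := h2
    have h4 : max (f y0) (f y1) ≤ D := max_le (hfD y0 hy0) (hfD y1 hy1)
    have h5 : min (f y0) (f y1) + max (f y0) (f y1) = f y0 + f y1 := min_add_max _ _
    linarith
  obtain ⟨ya, hya, hyane⟩ := hx
  have hYne : Y.Nonempty := ⟨ya, hya, hyane⟩
  set g : ℝ → ℝ := fun y => y - (D + ε' - f y) with hg
  have hbdd : BddAbove (g '' Y) := by
    refine ⟨1, ?_⟩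
    rintro v ⟨y, hy, rfl⟩
    have := hfD y hy
    have h1 := hy.1.2
    simp only [hg]
    linarith
  set yhat : ℝ := max 0 (sSup (g '' Y)) with hyhat
  have habove : ∀ y ∈ Y, g y ≤ yhat := fun y hy =>
    (le_csSup hbdd (Set.mem_image_of_mem g hy)).trans (le_max_right _ _)
  have hbelow : ∀ y ∈ Y, yhat ≤ y + (D + ε' - f y) := by
    intro y hy
    refine max_le ?_ (csSup_le (hYne.image g) ?_)
    · have := hfD y hy; have := hy.1.1; linarith
    · rintro v ⟨y', hy', rfl⟩
      have hk := key y' hy' y hy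
      have habs : y' - y ≤ |y' - y| := le_abs_self _
      simp only [hg]
      linarith
  refine ⟨yhat, ⟨le_max_left _ _, ?_⟩, ?_⟩
  · refine max_le (by norm_num) (csSup_le (hYne.image g) ?_)
    rintro v ⟨y, hy, rfl⟩
    have := hfD y hy
    have h1 := hy.1.2
    simp only [hg]
    linarith
  · intro ystar hstar hne
    have hyY : ystar ∈ Y := ⟨hstar, hne⟩
    have h1 := habove ystar hyY
    have h2 := hbelow ystar hyY
    have habs : |yhat - ystar| ≤ D + ε' - f ystar := by
      simp only [hg] at h1
      rw [abs_sub_le_iff]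
      exact ⟨by linarith, by linarith⟩
    have hreal : f ystar + |yhat - ystar| ≤ D + ε' := by linarith
    rw [← ENNReal.ofReal_toReal (hne_top ystar), ← ENNReal.ofReal_toReal hfin,
      ← ENNReal.ofReal_add ENNReal.toReal_nonneg (abs_nonneg _),
      ← ENNReal.ofReal_add ENNReal.toReal_nonneg hε'.le]
    exact ENNReal.ofReal_le_ofReal hreal

end RealizableRegression
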